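/- The set absint(P) of size-change graphs produced by the abstract interpretation is safe for the program P: whenever P:[] →* s₁ → s₂ in the environment-based semantics, some G ∈ absint(P) is safe for the pair (s₁, s₂). -/

import Mathlib

/- Untyped λ-expressions. -/
inductive Exp : Type
  | var : String → Exp
  | app : Exp → Exp → Exp
  | lam : String → Exp → Exp
deriving DecidableEq

namespace Exp

/-- Free variables. -/
def fv : Exp → Finset String
  | var x => {x}
  | app e1 e2 => fv e1 ∪ fv e2
  | lam x e => fv e \ {x}

/-- The set of subexpressions of a λ-expression. -/
def subexp : Exp → Set Exp
  | var x => {var x}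
  | app e1 e2 => insert (app e1 e2) (subexp e1 ∪ subexp e2)
  | lam x e => insert (lam x e) (subexp e)

end Exp

/- Values (closures), environments and states of the environment-based
semantics.  An environment is a (partial) map from variable names to values;
a state `e:ρ` pairs an expression with an environment. -/
inductive Val : Type
  | clos : String → Exp → (String → Option Val) → Val

abbrev Env := String → Option Val
abbrev State := Exp × Env

/-- A value `λx.e:ρ` viewed as a state. -/
def Val.toState : Val → State
  | .clos x e ρ => (Exp.lam x e, ρ)

/-- The λ-expression component of a value. -/
def Val.toExp : Val → Exp
  | .clos x e _ => Exp.lam x e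

def Env.update (ρ : Env) (x : String) (v : Val) : Env :=
  fun y => if y = x then some v else ρ y

def Env.empty : Env := fun _ => none
/- Environment-based evaluation `s ⇓ v` and the call relations
`→r` (Operator), `→d` (Operand), `→c` (Call); (Apply) evaluates an
application via its `→c` call. -/
mutual
  inductive EvalE : State → Val → Prop
    | value (x : String) (e : Exp) (ρ : Env) :
        EvalE (Exp.lam x e, ρ) (Val.clos x e ρ)
    | var {ρ : Env} {x : String} {v : Val} :
        ρ x = some v → EvalE (Exp.var x, ρ) v
    | apply {s s' : State} {v : Val} :
        CallC s s' → EvalE s' v → EvalE s v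
  inductive CallC : State → State → Prop
    | call {e1 e2 : Exp} {ρ ρ0 : Env} {x : String} {e0 : Exp} {v2 : Val} :
        EvalE (e1, ρ) (Val.clos x e0 ρ0) → EvalE (e2, ρ) v2 →
        CallC (Exp.app e1 e2, ρ) (e0, Env.update ρ0 x v2)
end

inductive CallR : State → State → Prop
  | oper (e1 e2 : Exp) (ρ : Env) : CallR (Exp.app e1 e2, ρ) (e1, ρ)

inductive CallD : State → State → Prop
  | opnd {e1 : Exp} {ρ : Env} {v1 : Val} (e2 : Exp) :
      EvalE (e1, ρ) v1 → CallD (Exp.app e1 e2, ρ) (e2, ρ)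

/-- The call relation `→` on states is `→r ∪ →d ∪ →c`. -/
def Call (s s' : State) : Prop := CallR s s' ∨ CallD s s' ∨ CallC s s'
/-- `Supp s s'` means `s' ∈ support(s)`, where
`support(e:ρ) = {e:ρ} ∪ ⋃_{x ∈ fv(e)} support(ρ(x))`. -/
inductive Supp : State → State → Prop
  | refl (s : State) : Supp s s
  | env {e : Exp} {ρ : Env} {x : String} {v : Val} {s' : State} :
      x ∈ e.fv → ρ x = some v → Supp v.toState s' → Supp (e, ρ) s'

/-- `s₁ ≻₁ s₂`: `s₂` is in the support of `s₁` and `s₁ ≠ s₂`. -/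
def Gt1 (s1 s2 : State) : Prop := Supp s1 s2 ∧ s1 ≠ s2

/-- `e₁:ρ₁ ≻₂ e₂:ρ₂`: `e₂` is a subexpression of `e₁`, `e₁ ≠ e₂`, and the
environments agree on `fv(e₂)`. -/
def Gt2 (s1 s2 : State) : Prop :=
  s2.1 ∈ Exp.subexp s1.1 ∧ s1.1 ≠ s2.1 ∧ ∀ x ∈ s2.1.fv, s1.2 x = s2.2 x

/-- `⪰` is the transitive closure of `≻₁ ∪ ≻₂ ∪ =`. -/
def Geq : State → State → Prop :=
  Relation.TransGen (fun s1 s2 => Gt1 s1 s2 ∨ Gt2 s1 s2 ∨ s1 = s2)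

/-- `s₁ ≻ s₂` iff `s₁ ⪰ s₂` and `s₁ ≠ s₂`. -/
def Gt (s1 s2 : State) : Prop := Geq s1 s2 ∧ s1 ≠ s2
/-- `GB s p` means the name path `p` belongs to the graph basis `gb(s)`:
`gb(e:ρ) = {ε} ∪ { xp | x ∈ fv(e), p ∈ gb(ρ(x)) }`. -/
inductive GB : State → List String → Prop
  | nil (s : State) : GB s []
  | cons {e : Exp} {ρ : Env} {x : String} {v : Val} {p : List String} :
      x ∈ e.fv → ρ x = some v → GB v.toState p → GB (e, ρ) (x :: p)

/-- `Valn s p s'` means `s̄(p) = s'`, the substate of `s` identified by the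
name path `p`:  `s̄(ε) = s` and `(e:ρ)‾(xp) = (ρ(x))‾(p)`. -/
inductive Valn : State → List String → State → Prop
  | nil (s : State) : Valn s [] s
  | cons {e : Exp} {ρ : Env} {x : String} {v : Val} {p : List String} {s' : State} :
      ρ x = some v → Valn v.toState p s' → Valn (e, ρ) (x :: p) s'
/-- Arc labels: `=` (eq) and `↓` (dec). -/
inductive Lab : Type
  | eq : Lab
  | dec : Lab
deriving DecidableEq

/-- Name paths; here the nodes of generated size-change graphs are `ε = []`
or single variables `[y]`. -/
abbrev NP := List String
abbrev Arc := NP × Lab × NP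
abbrev ArcSet := Set Arc

/-- `id= = {ε =→ ε} ∪ {y =→ y | y ∈ s}`. -/
def idEqS (s : Set String) : ArcSet :=
  {a | a = ([], Lab.eq, []) ∨ ∃ y ∈ s, a = ([y], Lab.eq, [y])}

/-- `id↓ = {ε ↓→ ε} ∪ {y =→ y | y ∈ s}`. -/
def idDecS (s : Set String) : ArcSet :=
  {a | a = ([], Lab.dec, []) ∨ ∃ y ∈ s, a = ([y], Lab.eq, [y])}

/-- The graph `{x =→ ε} ∪ {x ↓→ y | y ∈ s}` of the variable rule. -/
def varGraphS (x : String) (s : Set String) : ArcSet :=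
  {a | a = ([x], Lab.eq, []) ∨ ∃ y ∈ s, a = ([x], Lab.dec, [y])}

/-- `G₁^{-ε/λx.e₀}`: keep arcs between variables, replace `ε r→ z` (`z` a
variable) by `ε ↓→ z`, and, when `x ∉ fv(e₀)`, additionally replace each
arc `p r→ ε` by `p ↓→ ε`.  (`fve0` is `fv(e₀)`.) -/
def GminusS (x : String) (fve0 : Set String) (G1 : ArcSet) : ArcSet :=
  {a | (∃ (y : String) (r : Lab) (z : String), a = ([y], r, [z]) ∧ ([y], r, [z]) ∈ G1) ∨
       (∃ z : String, a = (([] : NP), Lab.dec, [z]) ∧ ∃ r, (([] : NP), r, [z]) ∈ G1) ∨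
       (x ∉ fve0 ∧ ∃ p : NP, a = (p, Lab.dec, ([] : NP)) ∧ ∃ r, (p, r, ([] : NP)) ∈ G1)}

/-- `G₂^{ε↦x}`: `y r→ x` for each `y r→ ε ∈ G₂`, and `ε ↓→ x` for each
`ε r→ ε ∈ G₂`. -/
def GepsS (x : String) (G2 : ArcSet) : ArcSet :=
  {a | (∃ (y : String) (r : Lab), a = ([y], r, [x]) ∧ ([y], r, ([] : NP)) ∈ G2) ∨
       (a = (([] : NP), Lab.dec, [x]) ∧ ∃ r, (([] : NP), r, ([] : NP)) ∈ G2)}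

/-- `∪_{e₀}`: union restricted to arcs whose target is in `fv(e₀) ∪ {ε}`. -/
def unionRS (fve0 : Set String) (A B : ArcSet) : ArcSet :=
  {a | a ∈ A ∪ B ∧ (a.2.2 = ([] : NP) ∨ ∃ y ∈ fve0, a.2.2 = [y])}

/-- The label set `R(x,z)` used in graph composition. -/
def labelsA (G1 G2 : ArcSet) (x z : NP) : Set Lab :=
  {r | ∃ y s, ((x, r, y) ∈ G1 ∧ (y, s, z) ∈ G2) ∨
              ((x, s, y) ∈ G1 ∧ (y, r, z) ∈ G2)}

/-- Composition `G₁;G₂` of size-change graphs (as arc sets): `x ↓→ z` whenever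
`↓ ∈ R(x,z)`, and `x =→ z` whenever `R(x,z) = {=}`. -/
def compA (G1 G2 : ArcSet) : ArcSet :=
  {a | (∃ x z, a = (x, Lab.dec, z) ∧ Lab.dec ∈ labelsA G1 G2 x z) ∨
       (∃ x z, a = (x, Lab.eq, z) ∧ labelsA G1 G2 x z = {Lab.eq})}
/- The graph-generating approximate semantics (for a fixed program `P`):
judgements `e ⇓ e', G` and `e →x e', G` on λ-expressions. -/
mutual
  inductive EvalAG (P : Exp) : Exp → Exp → ArcSet → Prop
    | value (x : String) (e : Exp) :
        EvalAG P (Exp.lam x e) (Exp.lam x e) (idEqS ↑(Exp.lam x e).fv)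
    | var {e1 e2 : Exp} {x : String} {e0 v2 : Exp} {G1 G2 : ArcSet} :
        Exp.app e1 e2 ∈ Exp.subexp P →
        EvalAG P e1 (Exp.lam x e0) G1 → EvalAG P e2 v2 G2 →
        EvalAG P (Exp.var x) v2 (varGraphS x ↑v2.fv)
    | apply {a e' v : Exp} {G' G : ArcSet} :
        CallAGc P a e' G' → EvalAG P e' v G → EvalAG P a v (compA G' G)
  inductive CallAGc (P : Exp) : Exp → Exp → ArcSet → Prop
    | call {e1 e2 : Exp} {x : String} {e0 v2 : Exp} {G1 G2 : ArcSet} :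
        EvalAG P e1 (Exp.lam x e0) G1 → EvalAG P e2 v2 G2 →
        CallAGc P (Exp.app e1 e2) e0
          (unionRS ↑e0.fv (GminusS x ↑e0.fv G1) (GepsS x G2))
end

inductive CallAGr (P : Exp) : Exp → Exp → ArcSet → Prop
  | oper (e1 e2 : Exp) : CallAGr P (Exp.app e1 e2) e1 (idDecS ↑e1.fv)

inductive CallAGd (P : Exp) : Exp → Exp → ArcSet → Prop
  | opnd (e1 e2 : Exp) : CallAGd P (Exp.app e1 e2) e2 (idDecS ↑e2.fv)

/-- The approximate graph-generating call relation (union of `→r`, `→d`, `→c`). -/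
def CallAGAny (P : Exp) (e e' : Exp) (G : ArcSet) : Prop :=
  CallAGr P e e' G ∨ CallAGd P e e' G ∨ CallAGc P e e' G
/-- A (generated) size-change graph, given by its arcs, is safe for the pair
of states `(s₁,s₂)`: `p₁ =→ p₂ ∈ G` implies `s̄₁(p₁) = s̄₂(p₂)`, and
`p₁ ↓→ p₂ ∈ G` implies `s̄₁(p₁) ≻ s̄₂(p₂)`. -/
def SafeArcs (G : ArcSet) (s1 s2 : State) : Prop :=
  (∀ p1 p2, (p1, Lab.eq, p2) ∈ G →
    ∀ t1 t2, Valn s1 p1 t1 → Valn s2 p2 t2 → t1 = t2) ∧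
  (∀ p1 p2, (p1, Lab.dec, p2) ∈ G →
    ∀ t1 t2, Valn s1 p1 t1 → Valn s2 p2 t2 → Gt t1 t2)

/-- The approximate call relation, forgetting the graphs. -/
def CallAU (P : Exp) (e e' : Exp) : Prop := ∃ G, CallAGAny P e e' G

/-- `absint(P)`: all graphs `G_j (j > 0)` arising along some approximate call
chain `P = e₀ → e₁, G₁ → … → e_j, G_j`. -/
def absint (P : Exp) : Set ArcSet :=
  {G | ∃ e e' : Exp, Relation.ReflTransGen (CallAU P) P e ∧ CallAGAny P e e' G}

/-!
Induction on the derivations of `s ⇓ v` and `s →c s'` shows that from an admissible state every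
evaluation and call of the environment semantics is mirrored, on the expression components, by a
derivation of the approximate semantics whose graph is safe for the pair of states. A state is
admissible when its expression is a subexpression of `P` and every closure in its environment is
built from a λ-subexpression of `P` and bound to a value that (VarAG) can bind to that variable;
`P:[]` is admissible because `P` is closed, and every call preserves admissibility.

Decreasing arcs are checked against the transitive closure of `Descent`, along which the pair
(environment depth, expression size) decreases lexicographically. That makes it irreflexive, as
`≻` requires, and transitive, as the composition of graphs in (ApplyAG) requires.
-/

open Relation

namespace Exp

theorem mem_subexp_self (e : Exp) : e ∈ subexp e := by
  cases e <;> simp [subexp]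

theorem subexp_trans {e1 e2 e3 : Exp} (h12 : e1 ∈ subexp e2) (h23 : e2 ∈ subexp e3) :
    e1 ∈ subexp e3 := by
  induction e3 with
  | var x =>
    rw [subexp, Set.mem_singleton_iff] at h23
    exact h23 ▸ h12
  | app a b iha ihb =>
    rw [subexp, Set.mem_insert_iff, Set.mem_union] at h23
    rcases h23 with rfl | h | h
    · exact h12
    · exact Or.inr (Or.inl (iha h))
    · exact Or.inr (Or.inr (ihb h))
  | lam x a iha =>
    rw [subexp, Set.mem_insert_iff] at h23
    rcases h23 with rfl | h
    · exact h12
    · exact Or.inr (iha h)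

theorem left_mem_subexp_app (e1 e2 : Exp) : e1 ∈ subexp (app e1 e2) := by
  simp [subexp, mem_subexp_self]

theorem right_mem_subexp_app (e1 e2 : Exp) : e2 ∈ subexp (app e1 e2) := by
  simp [subexp, mem_subexp_self]

theorem body_mem_subexp_lam (x : String) (e : Exp) : e ∈ subexp (lam x e) := by
  simp [subexp, mem_subexp_self]

end Exp

theorem Env.update_self (ρ : Env) (x : String) (v : Val) : ρ.update x v x = some v := by
  simp [Env.update]

theorem Env.update_of_ne (ρ : Env) {x y : String} (v : Val) (h : y ≠ x) :
    ρ.update x v y = ρ y := by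
  simp [Env.update, h]

@[simp] theorem valn_nil_iff {s t : State} : Valn s [] t ↔ t = s :=
  ⟨fun h => by cases h; rfl, fun h => h ▸ .nil s⟩

@[simp] theorem valn_cons_iff {s t : State} {y : String} {p : List String} :
    Valn s (y :: p) t ↔ ∃ v, s.2 y = some v ∧ Valn v.toState p t := by
  obtain ⟨e, ρ⟩ := s
  exact ⟨fun h => by cases h with | cons hy hp => exact ⟨_, hy, hp⟩,
    fun ⟨_, hy, hp⟩ => .cons hy hp⟩

theorem Valn.unique {s t₁ t₂ : State} {p : List String} (h₁ : Valn s p t₁) (h₂ : Valn s p t₂) :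
    t₁ = t₂ := by
  induction h₁ with
  | nil => exact (valn_nil_iff.1 h₂).symm
  | cons hv _ ih =>
    obtain ⟨w, hw, hp⟩ := valn_cons_iff.1 h₂
    cases hv.symm.trans hw
    exact ih hp

mutual
def Val.depth : Val → ℕ
  | .clos x e ρ => (Exp.lam x e).fv.sup fun y => Val.depthOpt (ρ y)
def Val.depthOpt : Option Val → ℕ
  | none => 0
  | some v => v.depth + 1
end

def stateDepth (s : State) : ℕ := s.1.fv.sup fun y => Val.depthOpt (s.2 y)

theorem stateDepth_toState (v : Val) : stateDepth v.toState = v.depth := by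
  cases v; rfl

inductive Descent : State → State → Prop
  | env {e : Exp} {ρ : Env} {x : String} {v : Val} :
      x ∈ e.fv → ρ x = some v → Descent (e, ρ) v.toState
  | sub {e e' : Exp} {ρ ρ' : Env} : e' ∈ e.subexp → sizeOf e' < sizeOf e → e'.fv ⊆ e.fv →
      (∀ y ∈ e'.fv, ρ' y = ρ y) → Descent (e, ρ) (e', ρ')

noncomputable def descentKey (s : State) : ℕ ×ₗ ℕ := toLex (stateDepth s, sizeOf s.1)

theorem Descent.key_lt {s t : State} (h : Descent s t) : descentKey t < descentKey s := by
  cases h with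
  | @env e ρ x v hx hv =>
    refine Prod.Lex.toLex_lt_toLex.2 (Or.inl ?_)
    have hle : Val.depthOpt (ρ x) ≤ stateDepth (e, ρ) :=
      Finset.le_sup (f := fun y => Val.depthOpt (ρ y)) hx
    rw [hv, Val.depthOpt] at hle
    simp only [stateDepth_toState]
    omega
  | @sub e e' ρ ρ' _ hsize hfv hρ =>
    refine Prod.Lex.toLex_strictMono (Prod.mk_lt_mk_of_le_of_lt ?_ hsize)
    calc stateDepth (e', ρ') = e'.fv.sup fun y => Val.depthOpt (ρ y) :=
          Finset.sup_congr rfl fun y hy => congrArg Val.depthOpt (hρ y hy)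
      _ ≤ stateDepth (e, ρ) := Finset.sup_mono hfv

theorem Relation.TransGen.descentKey_lt {s t : State} (h : TransGen Descent s t) :
    descentKey t < descentKey s := by
  induction h with
  | single h => exact h.key_lt
  | tail _ h ih => exact h.key_lt.trans ih

theorem Descent.gt1_or_gt2 {s t : State} (h : Descent s t) : Gt1 s t ∨ Gt2 s t := by
  have hne : s ≠ t := fun hst => (hst ▸ h.key_lt).false
  cases h with
  | env hx hv => exact Or.inl ⟨.env hx hv (.refl _), hne⟩
  | sub hsub hsize _ hρ =>
    exact Or.inr ⟨hsub, fun he => hsize.ne' (congrArg sizeOf he), fun y hy => (hρ y hy).symm⟩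

theorem Relation.TransGen.descent_gt {s t : State} (h : TransGen Descent s t) :
    Gt s t :=
  ⟨TransGen.mono (fun _ _ hd => hd.gt1_or_gt2.elim Or.inl (Or.inr ∘ Or.inl)) _ _ h,
    fun hst => (hst ▸ h.descentKey_lt).false⟩

theorem descent_app_left (e1 e2 : Exp) (ρ : Env) : Descent (.app e1 e2, ρ) (e1, ρ) :=
  .sub (Exp.left_mem_subexp_app e1 e2) (by simp only [Exp.app.sizeOf_spec]; omega)
    (by simp [Exp.fv]) fun _ _ => rfl

theorem descent_app_right (e1 e2 : Exp) (ρ : Env) : Descent (.app e1 e2, ρ) (e2, ρ) :=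
  .sub (Exp.right_mem_subexp_app e1 e2) (by simp only [Exp.app.sizeOf_spec]; omega)
    (by simp [Exp.fv]) fun _ _ => rfl

theorem descent_lam_body {x : String} {e0 : Exp} (ρ0 : Env) (v : Val) (hx : x ∉ e0.fv) :
    Descent (.lam x e0, ρ0) (e0, ρ0.update x v) := by
  have hne : ∀ y ∈ e0.fv, y ≠ x := fun y hy h => hx (h ▸ hy)
  refine .sub (Exp.body_mem_subexp_lam x e0) (by simp) (fun y hy => ?_)
    fun y hy => ρ0.update_of_ne v (hne y hy)
  simpa [Exp.fv] using ⟨hy, hne y hy⟩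

section StrongSafety

def Lab.Holds : Lab → State → State → Prop
  | .eq => Eq
  | .dec => TransGen Descent

theorem Lab.Holds.reflTransGen {r : Lab} {s t : State} (h : r.Holds s t) :
    ReflTransGen Descent s t := by
  cases r
  · exact h ▸ .refl
  · exact h.to_reflTransGen

theorem Lab.Holds.transGen_of_dec {r₁ r₂ : Lab} {a b c : State} (h₁ : r₁.Holds a b)
    (h₂ : r₂.Holds b c) (hdec : r₁ = .dec ∨ r₂ = .dec) : TransGen Descent a c := by
  rcases hdec with rfl | rfl
  · exact h₁.trans_left h₂.reflTransGen
  · exact TransGen.trans_right h₁.reflTransGen h₂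

def StrongSafe (G : ArcSet) (s₁ s₂ : State) : Prop :=
  ∀ p₁ r p₂, (p₁, r, p₂) ∈ G → ∀ t₁ t₂, Valn s₁ p₁ t₁ → Valn s₂ p₂ t₂ → r.Holds t₁ t₂

variable {G G' : ArcSet} {s₁ s₂ : State}

theorem StrongSafe.safeArcs (h : StrongSafe G s₁ s₂) : SafeArcs G s₁ s₂ :=
  ⟨fun p₁ p₂ ha => h p₁ .eq p₂ ha,
    fun p₁ p₂ ha t₁ t₂ h₁ h₂ => TransGen.descent_gt (h p₁ .dec p₂ ha t₁ t₂ h₁ h₂)⟩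

theorem StrongSafe.mono (h : StrongSafe G s₁ s₂) (hG : G' ⊆ G) : StrongSafe G' s₁ s₂ :=
  fun p₁ r p₂ ha => h p₁ r p₂ (hG ha)

theorem StrongSafe.union (h : StrongSafe G s₁ s₂) (h' : StrongSafe G' s₁ s₂) :
    StrongSafe (G ∪ G') s₁ s₂ :=
  fun p₁ r p₂ ha => ha.elim (h p₁ r p₂) (h' p₁ r p₂)

end StrongSafety

section Composition

variable {G₁ G₂ : ArcSet} {x y z : NP} {r r' : Lab}

theorem left_mem_labelsA (h₁ : (x, r, y) ∈ G₁) (h₂ : (y, r', z) ∈ G₂) : r ∈ labelsA G₁ G₂ x z :=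
  ⟨y, r', Or.inl ⟨h₁, h₂⟩⟩

theorem right_mem_labelsA (h₁ : (x, r, y) ∈ G₁) (h₂ : (y, r', z) ∈ G₂) :
    r' ∈ labelsA G₁ G₂ x z :=
  ⟨y, r, Or.inr ⟨h₁, h₂⟩⟩

theorem exists_of_mem_labelsA (h : r ∈ labelsA G₁ G₂ x z) :
    ∃ y r₁ r₂, (x, r₁, y) ∈ G₁ ∧ (y, r₂, z) ∈ G₂ ∧ (r = r₁ ∨ r = r₂) := by
  obtain ⟨y, r', ⟨h₁, h₂⟩ | ⟨h₁, h₂⟩⟩ := h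
  exacts [⟨y, r, r', h₁, h₂, Or.inl rfl⟩, ⟨y, r', r, h₁, h₂, Or.inr rfl⟩]

theorem exists_of_labelsA_eq_singleton_eq (h : labelsA G₁ G₂ x z = {Lab.eq}) :
    ∃ y, (x, Lab.eq, y) ∈ G₁ ∧ (y, Lab.eq, z) ∈ G₂ := by
  obtain ⟨y, r₁, r₂, h₁, h₂, -⟩ := exists_of_mem_labelsA (h ▸ Set.mem_singleton Lab.eq)
  have hr₁ : r₁ ∈ ({Lab.eq} : Set Lab) := h ▸ left_mem_labelsA h₁ h₂
  have hr₂ : r₂ ∈ ({Lab.eq} : Set Lab) := h ▸ right_mem_labelsA h₁ h₂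
  rw [Set.mem_singleton_iff] at hr₁ hr₂
  exact ⟨y, hr₁ ▸ h₁, hr₂ ▸ h₂⟩

theorem StrongSafe.compA {s₁ s₂ s₃ : State} (h₁ : StrongSafe G₁ s₁ s₂)
    (h₂ : StrongSafe G₂ s₂ s₃) (hmid : ∀ p r q, (p, r, q) ∈ G₁ → ∃ t, Valn s₂ q t) :
    StrongSafe (compA G₁ G₂) s₁ s₃ := by
  rintro p₁ r p₂ (⟨x, z, ha, hdec⟩ | ⟨x, z, ha, heq⟩) t₁ t₃ hv₁ hv₃ <;> cases ha
  · obtain ⟨y, r₁, r₂, a₁, a₂, hr⟩ := exists_of_mem_labelsA hdec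
    obtain ⟨t₂, hv₂⟩ := hmid _ _ _ a₁
    exact (h₁ _ _ _ a₁ _ _ hv₁ hv₂).transGen_of_dec (h₂ _ _ _ a₂ _ _ hv₂ hv₃)
      (hr.imp Eq.symm Eq.symm)
  · obtain ⟨y, a₁, a₂⟩ := exists_of_labelsA_eq_singleton_eq heq
    obtain ⟨t₂, hv₂⟩ := hmid _ _ _ a₁
    exact (h₁ _ _ _ a₁ _ _ hv₁ hv₂).trans (h₂ _ _ _ a₂ _ _ hv₂ hv₃)

end Composition

def TargetsIn (G : ArcSet) (S : Finset String) : Prop :=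
  ∀ p r q, (p, r, q) ∈ G → q = [] ∨ ∃ y ∈ S, q = [y]

theorem TargetsIn.exists_valn {G : ArcSet} {s : State} (hG : TargetsIn G s.1.fv)
    (hdef : ∀ y ∈ s.1.fv, ∃ w, s.2 y = some w) : ∀ p r q, (p, r, q) ∈ G → ∃ t, Valn s q t := by
  intro p r q ha
  rcases hG p r q ha with rfl | ⟨y, hy, rfl⟩
  · exact ⟨s, .nil s⟩
  · obtain ⟨w, hw⟩ := hdef y hy
    exact ⟨w.toState, valn_cons_iff.2 ⟨w, hw, .nil _⟩⟩

theorem targetsIn_unionRS (S : Finset String) (A B : ArcSet) : TargetsIn (unionRS ↑S A B) S :=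
  fun _ _ _ ha => ha.2

theorem targetsIn_compA {G₁ G₂ : ArcSet} {S : Finset String} (h : TargetsIn G₂ S) :
    TargetsIn (compA G₁ G₂) S := by
  rintro p r q (⟨x, z, ha, hr⟩ | ⟨x, z, ha, hr⟩) <;> cases ha
  · obtain ⟨y, _, _, -, a₂, -⟩ := exists_of_mem_labelsA hr
    exact h _ _ _ a₂
  · obtain ⟨y, -, a₂⟩ := exists_of_labelsA_eq_singleton_eq hr
    exact h _ _ _ a₂

theorem targetsIn_idEqS (e : Exp) : TargetsIn (idEqS ↑e.fv) e.fv := by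
  rintro p r q (ha | ⟨y, hy, ha⟩) <;> cases ha
  exacts [Or.inl rfl, Or.inr ⟨y, hy, rfl⟩]

theorem targetsIn_varGraphS (x : String) (e : Exp) : TargetsIn (varGraphS x ↑e.fv) e.fv := by
  rintro p r q (ha | ⟨y, hy, ha⟩) <;> cases ha
  exacts [Or.inl rfl, Or.inr ⟨y, hy, rfl⟩]

theorem EvalAG.targetsIn {P e v : Exp} {G : ArcSet} : EvalAG P e v G → TargetsIn G v.fv
  | .value x e => targetsIn_idEqS (.lam x e)
  | .var _ _ _ => targetsIn_varGraphS _ _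
  | .apply _ h => targetsIn_compA h.targetsIn

theorem CallAGc.targetsIn {P e e' : Exp} {G : ArcSet} : CallAGc P e e' G → TargetsIn G e'.fv
  | .call _ _ => targetsIn_unionRS _ _ _

theorem strongSafe_idEqS (S : Set String) (s : State) : StrongSafe (idEqS S) s s := by
  rintro p₁ r p₂ (ha | ⟨y, -, ha⟩) t₁ t₂ h₁ h₂ <;> cases ha
  exacts [h₁.unique h₂, h₁.unique h₂]

theorem strongSafe_idDecS (S : Set String) {e e' : Exp} {ρ : Env} (hd : Descent (e, ρ) (e', ρ)) :
    StrongSafe (idDecS S) (e, ρ) (e', ρ) := by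
  rintro p₁ r p₂ (ha | ⟨y, -, ha⟩) t₁ t₂ h₁ h₂ <;> cases ha
  · rw [valn_nil_iff] at h₁ h₂
    subst h₁ h₂
    exact .single hd
  · rw [valn_cons_iff] at h₁ h₂
    obtain ⟨v, hv, h₁⟩ := h₁
    obtain ⟨w, hw, h₂⟩ := h₂
    cases hv.symm.trans hw
    exact h₁.unique h₂

theorem strongSafe_varGraphS {ρ : Env} {x : String} {v : Val} (hx : ρ x = some v) :
    StrongSafe (varGraphS x ↑v.toExp.fv) (.var x, ρ) v.toState := by
  rintro p₁ r p₂ (ha | ⟨y, hy, ha⟩) t₁ t₂ h₁ h₂ <;> cases ha <;>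
    obtain ⟨_, hx', h₁⟩ := valn_cons_iff.1 h₁ <;> cases hx.symm.trans hx' <;>
    rw [valn_nil_iff] at h₁ <;> subst h₁
  · exact (valn_nil_iff.1 h₂).symm
  · obtain ⟨w, hw, h₂⟩ := valn_cons_iff.1 h₂
    rw [valn_nil_iff.1 h₂]
    cases v
    exact .single (.env hy hw)

section Call

variable {e1 e2 e0 : Exp} {x : String} {ρ ρ0 : Env} {v2 : Val}

theorem strongSafe_gminusS {G₁ : ArcSet} (hs : StrongSafe G₁ (e1, ρ) (.lam x e0, ρ0))
    (ht : TargetsIn G₁ (Exp.lam x e0).fv) :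
    StrongSafe (GminusS x ↑e0.fv G₁) (.app e1 e2, ρ) (e0, ρ0.update x v2) := by
  have valn_body : ∀ {z : String} {t : NP} (r : Lab), (t, r, [z]) ∈ G₁ → ∀ {t₂ : State},
      Valn (e0, ρ0.update x v2) [z] t₂ → Valn (Exp.lam x e0, ρ0) [z] t₂ := by
    intro z t r ha t₂ h₂
    obtain ⟨y, hy, hzy⟩ : ∃ y ∈ (Exp.lam x e0).fv, [z] = [y] := (ht _ _ _ ha).resolve_left (by simp)
    cases hzy
    have hzx : z ≠ x := by simp_all [Exp.fv]
    simpa [Env.update_of_ne _ _ hzx] using h₂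
  rintro p₁ r p₂ (⟨y, r, z, ha, hG⟩ | ⟨z, ha, r, hG⟩ | ⟨hx, _, ha, r, hG⟩) t₁ t₂ h₁ h₂ <;> cases ha
  · exact hs _ _ _ hG _ _ (by simpa using h₁) (valn_body r hG h₂)
  · rw [valn_nil_iff.1 h₁]
    exact .head' (descent_app_left e1 e2 ρ)
      (hs _ _ _ hG _ _ (.nil _) (valn_body r hG h₂)).reflTransGen
  · rw [valn_nil_iff.1 h₂]
    have hlam := descent_lam_body ρ0 v2 (by simpa using hx)
    refine .tail' ?_ hlam
    cases p₁ with
    | nil =>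
      rw [valn_nil_iff.1 h₁]
      exact .head (descent_app_left e1 e2 ρ) (hs _ _ _ hG _ _ (.nil _) (.nil _)).reflTransGen
    | cons y q => exact (hs _ _ _ hG _ _ (by simpa using h₁) (.nil _)).reflTransGen

theorem strongSafe_gepsS {G₂ : ArcSet} (hs : StrongSafe G₂ (e2, ρ) v2.toState) :
    StrongSafe (GepsS x G₂) (.app e1 e2, ρ) (e0, ρ0.update x v2) := by
  have valn_param : ∀ {t₂ : State}, Valn (e0, ρ0.update x v2) [x] t₂ → t₂ = v2.toState := by
    intro t₂ h₂
    simpa [Env.update_self] using h₂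
  rintro p₁ r p₂ (⟨y, r, ha, hG⟩ | ⟨ha, r, hG⟩) t₁ t₂ h₁ h₂ <;> cases ha <;>
    rw [valn_param h₂]
  · exact hs _ _ _ hG _ _ (by simpa using h₁) (.nil _)
  · rw [valn_nil_iff.1 h₁]
    exact .head' (descent_app_right e1 e2 ρ) (hs _ _ _ hG _ _ (.nil _) (.nil _)).reflTransGen

theorem strongSafe_call {G₁ G₂ : ArcSet} (hs₁ : StrongSafe G₁ (e1, ρ) (.lam x e0, ρ0))
    (ht₁ : TargetsIn G₁ (Exp.lam x e0).fv) (hs₂ : StrongSafe G₂ (e2, ρ) v2.toState) :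
    StrongSafe (unionRS ↑e0.fv (GminusS x ↑e0.fv G₁) (GepsS x G₂))
      (.app e1 e2, ρ) (e0, ρ0.update x v2) :=
  ((strongSafe_gminusS hs₁ ht₁).union (strongSafe_gepsS hs₂)).mono fun _ ha => ha.1

end Call

/-- The premise of (VarAG): the approximate semantics may bind the value `e` to `y`. -/
def AbsBound (P : Exp) (y : String) (e : Exp) : Prop :=
  ∃ e1 e2 e0 G₁ G₂, Exp.app e1 e2 ∈ P.subexp ∧
    EvalAG P e1 (.lam y e0) G₁ ∧ EvalAG P e2 e G₂

inductive GoodVal (P : Exp) : Val → Prop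
  | mk {x : String} {e0 : Exp} {ρ : Env} : Exp.lam x e0 ∈ P.subexp →
      (∀ y ∈ (Exp.lam x e0).fv, ∃ w, ρ y = some w ∧ AbsBound P y w.toExp) →
      (∀ y ∈ (Exp.lam x e0).fv, ∀ w, ρ y = some w → GoodVal P w) →
      GoodVal P (.clos x e0 ρ)

def GoodEnv (P : Exp) (ρ : Env) (S : Finset String) : Prop :=
  ∀ y ∈ S, ∃ w, ρ y = some w ∧ AbsBound P y w.toExp ∧ GoodVal P w

theorem goodVal_clos_iff {P e0 : Exp} {x : String} {ρ : Env} :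
    GoodVal P (.clos x e0 ρ) ↔ Exp.lam x e0 ∈ P.subexp ∧ GoodEnv P ρ (Exp.lam x e0).fv := by
  constructor
  · rintro ⟨hsub, hbound, hgood⟩
    refine ⟨hsub, fun y hy => ?_⟩
    obtain ⟨w, hw, hb⟩ := hbound y hy
    exact ⟨w, hw, hb, hgood y hy w hw⟩
  · rintro ⟨hsub, hρ⟩
    refine .mk hsub (fun y hy => ?_) fun y hy w hw => ?_
    · obtain ⟨w, hw, hb, -⟩ := hρ y hy
      exact ⟨w, hw, hb⟩
    · obtain ⟨w', hw', -, hg⟩ := hρ y hy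
      cases hw.symm.trans hw'
      exact hg

def Admissible (P : Exp) (s : State) : Prop := s.1 ∈ P.subexp ∧ GoodEnv P s.2 s.1.fv

section Admissible

variable {P e1 e2 : Exp} {ρ : Env}

theorem Admissible.defined {s : State} (h : Admissible P s) : ∀ y ∈ s.1.fv, ∃ w, s.2 y = some w :=
  fun y hy => (h.2 y hy).imp fun _ hw => hw.1

theorem Admissible.app_left (h : Admissible P (.app e1 e2, ρ)) : Admissible P (e1, ρ) :=
  ⟨Exp.subexp_trans (Exp.left_mem_subexp_app e1 e2) h.1,
    fun y hy => h.2 y (Finset.mem_union_left _ hy)⟩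

theorem Admissible.app_right (h : Admissible P (.app e1 e2, ρ)) : Admissible P (e2, ρ) :=
  ⟨Exp.subexp_trans (Exp.right_mem_subexp_app e1 e2) h.1,
    fun y hy => h.2 y (Finset.mem_union_right _ hy)⟩

theorem admissible_body {x : String} {e0 : Exp} {ρ0 : Env} {v : Val}
    (hf : GoodVal P (.clos x e0 ρ0)) (hv : GoodVal P v) (hb : AbsBound P x v.toExp) :
    Admissible P (e0, ρ0.update x v) := by
  obtain ⟨hsub, hρ0⟩ := goodVal_clos_iff.1 hf
  refine ⟨Exp.subexp_trans (Exp.body_mem_subexp_lam x e0) hsub, fun y hy => ?_⟩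
  by_cases hyx : y = x
  · subst hyx
    exact ⟨v, ρ0.update_self y v, hb, hv⟩
  · show ∃ w, ρ0.update x v y = some w ∧ _
    rw [ρ0.update_of_ne v hyx]
    exact hρ0 y (by simpa [Exp.fv] using ⟨hy, hyx⟩)

end Admissible

mutual

theorem EvalE.exists_evalAG {P : Exp} {s : State} {v : Val} :
    EvalE s v → Admissible P s →
      GoodVal P v ∧ ∃ G, EvalAG P s.1 v.toExp G ∧ StrongSafe G s v.toState
  | .value x e ρ, hs => ⟨goodVal_clos_iff.2 hs, _, .value x e, strongSafe_idEqS _ _⟩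
  | .var hx, hs => by
    obtain ⟨w, hw, ⟨e1, e2, e0, G₁, G₂, happ, h₁, h₂⟩, hgood⟩ :=
      hs.2 _ (Finset.mem_singleton_self _)
    cases hx.symm.trans hw
    exact ⟨hgood, _, .var happ h₁ h₂, strongSafe_varGraphS hx⟩
  | .apply hc he, hs => by
    obtain ⟨hs', G', hcall, hsafe'⟩ := hc.exists_callAGc hs
    obtain ⟨hv, G, heval, hsafe⟩ := he.exists_evalAG hs'
    exact ⟨hv, _, .apply hcall heval,
      hsafe'.compA hsafe (hcall.targetsIn.exists_valn hs'.defined)⟩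

theorem CallC.exists_callAGc {P : Exp} {s s' : State} :
    CallC s s' → Admissible P s →
      Admissible P s' ∧ ∃ G, CallAGc P s.1 s'.1 G ∧ StrongSafe G s s'
  | .call h₁ h₂, hs => by
    obtain ⟨hf, G₁, hev₁, hs₁⟩ := h₁.exists_evalAG hs.app_left
    obtain ⟨hv, G₂, hev₂, hs₂⟩ := h₂.exists_evalAG hs.app_right
    exact ⟨admissible_body hf hv ⟨_, _, _, _, _, hs.1, hev₁, hev₂⟩, _, .call hev₁ hev₂,
      strongSafe_call hs₁ hev₁.targetsIn hs₂⟩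

end

theorem Call.exists_callAG {P : Exp} {s s' : State} (h : Call s s') (hs : Admissible P s) :
    Admissible P s' ∧ ∃ G, CallAGAny P s.1 s'.1 G ∧ StrongSafe G s s' := by
  rcases h with ⟨e1, e2, ρ⟩ | ⟨e2, -⟩ | hc
  · exact ⟨hs.app_left, _, .inl (.oper e1 e2), strongSafe_idDecS _ (descent_app_left e1 e2 ρ)⟩
  · exact ⟨hs.app_right, _, .inr (.inl (.opnd _ e2)),
      strongSafe_idDecS _ (descent_app_right _ e2 _)⟩
  · obtain ⟨hs', G, hG, hsafe⟩ := hc.exists_callAGc hs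
    exact ⟨hs', G, .inr (.inr hG), hsafe⟩

theorem admissible_of_reachable {P : Exp} (hP : P.fv = ∅) {s : State}
    (h : ReflTransGen Call (P, Env.empty) s) :
    Admissible P s ∧ ReflTransGen (CallAU P) P s.1 := by
  induction h with
  | refl => exact ⟨⟨P.mem_subexp_self, by simp [hP, GoodEnv]⟩, .refl⟩
  | tail _ hc ih =>
    obtain ⟨hs', G, hG, -⟩ := hc.exists_callAG ih.1
    exact ⟨hs', ih.2.tail ⟨G, hG⟩⟩

/-- `absint(P)` is safe for `P`: whenever `P:[] →* s₁ → s₂` in the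
environment-based semantics, some `G ∈ absint(P)` is safe for `(s₁,s₂)`. -/
theorem absint_safe (P : Exp) (hP : P.fv = ∅) :
    ∀ s1 s2 : State, Relation.ReflTransGen Call (P, Env.empty) s1 → Call s1 s2 →
      ∃ G ∈ absint P, SafeArcs G s1 s2 := by
  intro s1 s2 hreach hcall
  obtain ⟨hs1, hpath⟩ := admissible_of_reachable hP hreach
  obtain ⟨-, G, hG, hsafe⟩ := hcall.exists_callAG hs1
  exact ⟨G, ⟨_, _, hpath, hG⟩, hsafe.safeArcs⟩
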